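/- arXiv:2502.07187 — 2 statements merged into one kernel-verified Lean document; each statement's English description precedes it below -/
import Mathlib

section
/- For every locally injective local regularizer ψ : H_OTP × ℕ → ℝ≥0, every learner A induced by ψ, and every d ≥ 1, there exist a sequence S of 2d distinct points in ℕ and a hypothesis h* ∈ H_OTP such that the transductive error satisfies L^T_{S,h*}(A) ≥ 1/4. -/
/-!
Write `C = P ⊕ Q`. Trained on every point of the fiber `{z | C z = b}` but `x`, a learner sees
the share `cond b Q P` and nothing of the other one. Flipping the hidden share at `x` and at a
point `w` of the other fiber gives a rival hypothesis in `H_OTP` that fits the sample and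
disagrees with `h_{P,Q}` at `x`; so the learner errs at `x` whenever `ψ(·, x)` prefers a rival.
For fixed `x` and `w` taking rivals permutes the balanced pairs in cycles of length four, and
along a cycle a locally injective `ψ(·, x)` cannot weakly increase all the way round, so at least
one pair in four prefers its rival at `x`. Averaging over all balanced pairs of length `4d` gives
a pair with at least `d` such points, half of them in one fiber of size `2d`; leaving these out
one at a time gives transductive error at least `(d/2)/(2d) = 1/4`.
-/

open scoped Classical

noncomputable section

/-- Binary strings of length `d`, i.e. elements of `{0,1}^d`. -/
abbrev BStr (d : ℕ) := Fin d → Bool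

/-- Entrywise XOR of two binary strings. -/
def bxor {d : ℕ} (A B : BStr d) : BStr d := fun i => xor (A i) (B i)

/-- `σ₀(C)`: the positions at which `C` takes the value `0`. -/
def sigma0 {d : ℕ} (C : BStr d) : Finset (Fin d) := Finset.univ.filter fun i => C i = false

/-- `σ₁(C)`: the positions at which `C` takes the value `1`. -/
def sigma1 {d : ℕ} (C : BStr d) : Finset (Fin d) := Finset.univ.filter fun i => C i = true

/-- A binary string is balanced if it has as many `0`-entries as `1`-entries. -/
def BalancedStr {d : ℕ} (C : BStr d) : Prop := (sigma0 C).card = (sigma1 C).card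

/-- The label space `Y = {0,1} × {0,1}^*`. -/
abbrev Label : Type := Bool × List Bool

/-- The hypothesis `h_{A,B} : ℕ → Y`, mapping `x` to `(0, A)` if `(A ⊕ B)(x mod d) = 0`
and to `(1, B)` if `(A ⊕ B)(x mod d) = 1`. -/
def hyp {d : ℕ} (A B : BStr d) : ℕ → Label := fun x =>
  if hd : 0 < d then
    if bxor A B ⟨x % d, Nat.mod_lt x hd⟩ = true then (true, List.ofFn B)
    else (false, List.ofFn A)
  else (false, List.ofFn A)

/-- The secret-sharing hypothesis class `H_OTP`. -/
def HOTP : Set (ℕ → Label) :=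
  { h | ∃ (d : ℕ) (A B : BStr d), 1 ≤ d ∧ BalancedStr (bxor A B) ∧ h = hyp A B }

/-- The training sequence obtained by labeling the points of `S` by `h` and removing
the `i`-th (labeled) point. -/
def trainSeq {X Y : Type*} {n : ℕ} (S : Fin n → X) (h : X → Y) (i : Fin n) :
    List (X × Y) :=
  (List.ofFn fun j => (S j, h (S j))).eraseIdx i

/-- The transductive error `L^T_{S,h}(Alg)` of the learner `Alg` on the instance `(S, h)`. -/
def transErr {X Y : Type*} {n : ℕ} (Alg : List (X × Y) → X → Y) (S : Fin n → X)
    (h : X → Y) : ℝ :=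
  (∑ i : Fin n, if Alg (trainSeq S h i) (S i) = h (S i) then (0 : ℝ) else 1) / n

/-- `Alg` is a transductive learner for the class `H`. -/
def TransLearner {X Y : Type*} (H : Set (X → Y)) (Alg : List (X × Y) → X → Y) : Prop :=
  ∃ m : ℝ → ℕ, ∀ ε : ℝ, 0 < ε → ε < 1 → ∀ h ∈ H, ∀ (n : ℕ) (S : Fin n → X),
    m ε ≤ n → transErr Alg S h ≤ ε

/-- The class `H` is transductively learnable. -/
def TransLearnable {X Y : Type*} (H : Set (X → Y)) : Prop :=
  ∃ Alg : List (X × Y) → X → Y, TransLearner H Alg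

/-- The empirical risk `L_S(h)`: the fraction of examples in `S` mislabeled by `h`. -/
def empRisk {X Y : Type*} (S : List (X × Y)) (h : X → Y) : ℝ :=
  ((S.map fun p => if h p.1 = p.2 then (0 : ℝ) else 1).sum) / S.length

/-- The learner `Alg` is induced by the local regularizer `ψ : H × X → ℝ≥0`: whenever
the argmin set `M(S,x)` of `ψ(·, x)` over zero-empirical-risk hypotheses is nonempty,
`Alg S x` agrees with some hypothesis in `M(S,x)` at `x`. -/
def InducedBy {X Y : Type*} (H : Set (X → Y)) (ψ : H → X → NNReal)
    (Alg : List (X × Y) → X → Y) : Prop :=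
  ∀ (S : List (X × Y)) (x : X),
    (∃ h : H, empRisk S h.1 = 0 ∧ ∀ g : H, empRisk S g.1 = 0 → ψ h x ≤ ψ g x) →
    ∃ h : H, empRisk S h.1 = 0 ∧ (∀ g : H, empRisk S g.1 = 0 → ψ h x ≤ ψ g x) ∧
      Alg S x = h.1 x

/-- A local regularizer is locally injective if `ψ(·, x)` is injective for every `x`. -/
def LocallyInjective {X Y : Type*} (H : Set (X → Y)) (ψ : H → X → NNReal) : Prop :=
  ∀ x : X, Function.Injective fun h : H => ψ h x

/-- A class is generalized binary if each of its hypotheses has image of size at most 2. -/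
def GeneralizedBinary {X Y : Type*} (H : Set (X → Y)) : Prop :=
  ∀ h ∈ H, ∃ y₁ y₂ : Y, ∀ x : X, h x = y₁ ∨ h x = y₂

/-- A class has distinct label sets if `im` is injective on it. -/
def DistinctLabelSets {X Y : Type*} (H : Set (X → Y)) : Prop :=
  ∀ h ∈ H, ∀ h' ∈ H, Set.range h = Set.range h' → h = h'

/-- A class is GBDLS if it is generalized binary and has distinct label sets. -/
def GBDLS {X Y : Type*} (H : Set (X → Y)) : Prop :=
  GeneralizedBinary H ∧ DistinctLabelSets H

/-- `e(i)`: the standard basis string, with a single `1` in position `i`. -/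
def evec {d : ℕ} (i : Fin d) : BStr d := fun j => decide (j = i)

/-- `C ⊕ e(x) ⊕ e(x')`: the string `C` with its `x`-th and `x'`-th entries flipped. -/
def flip2 {d : ℕ} (C : BStr d) (x x' : Fin d) : BStr d := bxor (bxor C (evec x)) (evec x')

/-- The training sequence consisting of the examples `(s, h s)` for `s ∈ S`
(listed in increasing order). -/
def trainOn {d : ℕ} (S : Finset (Fin d)) (h : ℕ → Label) : List (ℕ × Label) :=
  (S.sort (· ≤ ·)).map fun s => ((s : ℕ), h (s : ℕ))

open Finset

section Learning

variable {X Y : Type*}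

lemma empRisk_eq_zero_iff (L : List (X × Y)) (g : X → Y) :
    empRisk L g = 0 ↔ ∀ p ∈ L, g p.1 = p.2 := by
  rcases eq_or_ne L [] with rfl | hL
  · simp [empRisk]
  have hlen : (L.length : ℝ) ≠ 0 := by simpa using hL
  have hnonneg : ∀ r ∈ L.map fun p => if g p.1 = p.2 then (0 : ℝ) else 1, 0 ≤ r := by
    simp only [List.mem_map]; rintro _ ⟨p, -, rfl⟩; split_ifs <;> norm_num
  rw [empRisk, div_eq_zero_iff, or_iff_left hlen]
  constructor
  · intro h p hp
    by_contra hne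
    have := List.all_zero_of_le_zero_le_of_sum_eq_zero hnonneg h (List.mem_map_of_mem hp)
    simp [hne] at this
  · intro h
    exact List.sum_eq_zero fun r hr => by
      obtain ⟨p, hp, rfl⟩ := List.mem_map.1 hr
      simp [h p hp]

lemma mem_trainSeq {n : ℕ} {S : Fin n → X} {h : X → Y} {i : Fin n} {p : X × Y} :
    p ∈ trainSeq S h i ↔ ∃ j ≠ i, (S j, h (S j)) = p := by
  simp only [trainSeq, List.mem_eraseIdx_iff_getElem, List.length_ofFn, List.getElem_ofFn]
  constructor
  · rintro ⟨k, hk, hki, rfl⟩; exact ⟨⟨k, hk⟩, fun h => hki (congrArg Fin.val h), rfl⟩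
  · rintro ⟨j, hji, rfl⟩; exact ⟨j, j.isLt, fun h => hji (Fin.ext h), rfl⟩

lemma empRisk_trainSeq_eq_zero_iff {n : ℕ} (S : Fin n → X) (h g : X → Y) (i : Fin n) :
    empRisk (trainSeq S h i) g = 0 ↔ ∀ j ≠ i, g (S j) = h (S j) := by
  simp only [empRisk_eq_zero_iff, mem_trainSeq]
  constructor
  · exact fun H j hj => H _ ⟨j, hj, rfl⟩
  · rintro H _ ⟨j, hj, rfl⟩; exact H j hj

lemma card_div_le_transErr (Alg : List (X × Y) → X → Y) {n : ℕ} (S : Fin n → X) (h : X → Y)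
    (E : Finset (Fin n)) (hE : ∀ i ∈ E, Alg (trainSeq S h i) (S i) ≠ h (S i)) :
    (#E : ℝ) / n ≤ transErr Alg S h := by
  unfold transErr
  gcongr
  calc (#E : ℝ) = ∑ i ∈ E, if Alg (trainSeq S h i) (S i) = h (S i) then (0 : ℝ) else 1 := by
        rw [sum_congr rfl fun i hi => if_neg (hE i hi)]; simp
    _ ≤ _ := sum_le_univ_sum_of_nonneg fun i => by split_ifs <;> norm_num

lemma InducedBy.apply_ne {H : Set (X → Y)} {ψ : H → X → NNReal} {Alg : List (X × Y) → X → Y}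
    (hAlg : InducedBy H ψ Alg) {L : List (X × Y)} {x : X}
    (hfin : {f : H | empRisk L f.1 = 0}.Finite) {h g : H} (hh : empRisk L h.1 = 0)
    (hg : empRisk L g.1 = 0) (hlt : ψ g x < ψ h x)
    (huniq : ∀ f : H, empRisk L f.1 = 0 → f.1 x = h.1 x → f = h) :
    Alg L x ≠ h.1 x := by
  obtain ⟨m, hm, hmin⟩ := Set.exists_min_image _ (fun f : H => ψ f x) hfin ⟨h, hh⟩
  obtain ⟨f, hf, hfmin, hAlgf⟩ := hAlg L x ⟨m, hm, fun f hf => hmin f hf⟩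
  rw [hAlgf]
  intro hfx
  obtain rfl := huniq f hf hfx
  exact (hfmin g hg).not_gt hlt

end Learning

section Strings

variable {D : ℕ}

lemma bxor_apply (A B : BStr D) (z : Fin D) : bxor A B z = xor (A z) (B z) := rfl

lemma flip2_apply (C : BStr D) (x w z : Fin D) :
    flip2 C x w z = xor (xor (C z) (decide (z = x))) (decide (z = w)) := rfl

lemma flip2_flip2 (C : BStr D) (x w : Fin D) : flip2 (flip2 C x w) x w = C := by
  funext z
  simp only [flip2_apply]
  cases C z <;> cases decide (z = x) <;> cases decide (z = w) <;> rfl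

lemma bxor_flip2_left (P Q : BStr D) (x w : Fin D) :
    bxor (flip2 P x w) Q = flip2 (bxor P Q) x w := by
  funext z; simp only [flip2_apply, bxor_apply]; cases P z <;> cases Q z <;> simp

lemma bxor_flip2_right (P Q : BStr D) (x w : Fin D) :
    bxor P (flip2 Q x w) = flip2 (bxor P Q) x w := by
  funext z; simp only [flip2_apply, bxor_apply]; cases P z <;> cases Q z <;> simp

lemma flip2_apply_of_ne {C : BStr D} {x w z : Fin D} (hx : z ≠ x) (hw : z ≠ w) :
    flip2 C x w z = C z := by
  simp [flip2_apply, hx, hw]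

lemma flip2_apply_left {C : BStr D} {x w : Fin D} (h : x ≠ w) : flip2 C x w x = !C x := by
  simp [flip2_apply, h]

lemma flip2_apply_right {C : BStr D} {x w : Fin D} (h : x ≠ w) : flip2 C x w w = !C w := by
  simp [flip2_apply, h.symm]

lemma flip2_eq_comp_swap {C : BStr D} {x w : Fin D} (h : C x ≠ C w) :
    flip2 C x w = C ∘ Equiv.swap x w := by
  have hxw : x ≠ w := fun hxw => h (hxw ▸ rfl)
  have hwx : C w = !C x := by cases hx : C x <;> cases hw : C w <;> simp_all
  funext z
  rcases eq_or_ne z x with rfl | hzx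
  · simp [flip2_apply_left hxw, hwx]
  rcases eq_or_ne z w with rfl | hzw
  · simp [flip2_apply_right hxw, hwx]
  · simp [flip2_apply_of_ne hzx hzw, Equiv.swap_apply_of_ne_of_ne hzx hzw]

lemma card_filter_comp_perm (C : BStr D) (σ : Equiv.Perm (Fin D)) (b : Bool) :
    #{z | (C ∘ σ) z = b} = #{z | C z = b} :=
  card_equiv σ (by simp)

lemma balancedStr_iff (C : BStr D) : BalancedStr C ↔ ∀ b, 2 * #{z | C z = b} = D := by
  have h := card_filter_add_card_filter_not (s := univ) (fun z => C z = false)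
  simp only [Bool.not_eq_false, card_univ, Fintype.card_fin] at h
  constructor
  · intro hC b; cases b <;> (unfold BalancedStr sigma0 sigma1 at hC; omega)
  · intro hC; have := hC false; have := hC true; unfold BalancedStr sigma0 sigma1; omega

lemma BalancedStr.flip2 {C : BStr D} (hC : BalancedStr C) {x w : Fin D} (h : C x ≠ C w) :
    BalancedStr (flip2 C x w) := by
  rw [balancedStr_iff] at hC ⊢
  simpa only [flip2_eq_comp_swap h, card_filter_comp_perm] using hC

lemma eq_of_balancedStr_of_forall_imp {C C' : BStr D} (hC : BalancedStr C)
    (hC' : BalancedStr C') {b : Bool} (h : ∀ z, C z = b → C' z = b) : C' = C := by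
  rw [balancedStr_iff] at hC hC'
  have hsub : ({z | C z = b} : Finset (Fin D)) ⊆ ({z | C' z = b} : Finset (Fin D)) := fun z hz => by
    simp only [mem_filter, mem_univ, true_and] at hz ⊢; exact h z hz
  have heq := eq_of_subset_of_card_le hsub (by have := hC b; have := hC' b; omega)
  funext z
  have hz : C z = b ↔ C' z = b := by simpa using Finset.ext_iff.1 heq z
  cases hc : C z <;> cases hc' : C' z <;> cases b <;> simp_all

lemma eq_of_bxor_eq_of_cond_eq {A B P Q : BStr D} (hC : bxor A B = bxor P Q) {b : Bool}
    (hs : cond b B A = cond b Q P) : A = P ∧ B = Q := by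
  have hC' z := congrFun hC z
  simp only [bxor_apply] at hC'
  cases b
  · obtain rfl : A = P := hs
    exact ⟨rfl, funext fun z => by simpa using hC' z⟩
  · obtain rfl : B = Q := hs
    exact ⟨funext fun z => by simpa using hC' z, rfl⟩

lemma exists_balancedStr (hD : Even D) : ∃ C : BStr D, BalancedStr C := by
  obtain ⟨s, -, hs⟩ := exists_subset_card_eq (s := (univ : Finset (Fin D))) (n := D / 2)
    (by simp only [card_univ, Fintype.card_fin]; omega)
  refine ⟨fun z => decide (z ∈ s), ?_⟩
  have h := card_filter_add_card_filter_not (s := univ) (fun z => decide (z ∈ s) = true)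
  simp only [decide_eq_true_eq, filter_mem_eq_inter, univ_inter, card_univ,
    Fintype.card_fin] at h
  unfold BalancedStr sigma0 sigma1
  simp only [decide_eq_true_eq, decide_eq_false_iff_not, filter_mem_eq_inter, univ_inter]
  obtain ⟨m, rfl⟩ := hD
  omega

end Strings

section Hypotheses

variable {D : ℕ}

lemma hyp_apply_fin (A B : BStr D) (z : Fin D) :
    hyp A B z = (bxor A B z, List.ofFn (cond (bxor A B z) B A)) := by
  have hz : (⟨(z : ℕ) % D, Nat.mod_lt _ z.pos⟩ : Fin D) = z := Fin.ext (Nat.mod_eq_of_lt z.isLt)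
  unfold hyp
  rw [dif_pos z.pos, hz]
  cases bxor A B z <;> rfl

lemma length_hyp_snd (A B : BStr D) (y : ℕ) : (hyp A B y).2.length = D := by
  unfold hyp; split_ifs <;> simp

lemma hyp_apply_fin_eq_iff {A B P Q : BStr D} {z : Fin D} :
    hyp A B z = hyp P Q z ↔
      bxor A B z = bxor P Q z ∧ cond (bxor P Q z) B A = cond (bxor P Q z) Q P := by
  simp only [hyp_apply_fin, Prod.mk.injEq, List.ofFn_inj]
  constructor
  · rintro ⟨h1, h2⟩; exact ⟨h1, h1 ▸ h2⟩
  · rintro ⟨h1, h2⟩; exact ⟨h1, h1 ▸ h2⟩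

lemma hyp_mem_HOTP {A B : BStr D} (h : BalancedStr (bxor A B)) (hD : 0 < D) :
    hyp A B ∈ HOTP :=
  ⟨D, A, B, hD, h, rfl⟩

lemma hyp_eq_of_forall_fiber {d' : ℕ} {A B : BStr d'} {P Q : BStr D}
    (hAB : BalancedStr (bxor A B)) (hPQ : BalancedStr (bxor P Q)) (x : Fin D)
    (h : ∀ z : Fin D, bxor P Q z = bxor P Q x → hyp A B z = hyp P Q z) :
    hyp A B = hyp P Q := by
  obtain rfl : d' = D := by
    simpa only [length_hyp_snd] using congrArg (fun l : Label => l.2.length) (h x rfl)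
  have hC : bxor A B = bxor P Q := eq_of_balancedStr_of_forall_imp hPQ hAB fun z hz =>
    (hyp_apply_fin_eq_iff.1 (h z hz)).1.trans hz
  obtain ⟨rfl, rfl⟩ := eq_of_bxor_eq_of_cond_eq hC (hyp_apply_fin_eq_iff.1 (h x rfl)).2
  rfl

lemma finite_setOf_mem_HOTP_apply_eq (y : ℕ) (l : Label) :
    {g | g ∈ HOTP ∧ g y = l}.Finite := by
  refine (Set.finite_range fun p : BStr l.2.length × BStr l.2.length => hyp p.1 p.2).subset ?_
  rintro _ ⟨⟨d', A, B, -, -, rfl⟩, hy⟩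
  obtain rfl : d' = l.2.length := by rw [← hy, length_hyp_snd]
  exact ⟨(A, B), rfl⟩

end Hypotheses

section Rival

variable {D : ℕ}

/-- The rival of `h_{P,Q}` at `x` and `w`: flip, at `x` and `w`, the share that the labels of
the points `z` with `(P ⊕ Q) z = (P ⊕ Q) x` do not reveal. When `(P ⊕ Q) x ≠ (P ⊕ Q) w` it
agrees with `h_{P,Q}` on these points except `x`, but not at `x`. -/
def rival (p : BStr D × BStr D) (x w : Fin D) : BStr D × BStr D :=
  if bxor p.1 p.2 x then (flip2 p.1 x w, p.2) else (p.1, flip2 p.2 x w)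

lemma bxor_rival (p : BStr D × BStr D) (x w : Fin D) :
    bxor (rival p x w).1 (rival p x w).2 = flip2 (bxor p.1 p.2) x w := by
  unfold rival; split <;> simp only [bxor_flip2_left, bxor_flip2_right]

lemma cond_rival (p : BStr D × BStr D) (x w : Fin D) :
    cond (bxor p.1 p.2 x) (rival p x w).2 (rival p x w).1 = cond (bxor p.1 p.2 x) p.2 p.1 := by
  unfold rival; cases bxor p.1 p.2 x <;> rfl

lemma rival_rival (p : BStr D × BStr D) {x w : Fin D} (h : x ≠ w) :
    rival (rival p x w) x w = (flip2 p.1 x w, flip2 p.2 x w) := by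
  have hx := congrFun (bxor_rival p x w) x
  rw [flip2_apply_left h] at hx
  unfold rival at hx ⊢
  cases hc : bxor p.1 p.2 x <;> simp_all

lemma rival_iterate_four (p : BStr D × BStr D) {x w : Fin D} (h : x ≠ w) :
    (rival · x w)^[4] p = p := by
  simp only [Function.iterate_succ, Function.iterate_zero, Function.comp_apply, id,
    rival_rival _ h, flip2_flip2]

lemma hyp_rival_apply_of_ne (p : BStr D × BStr D) {x w z : Fin D}
    (hw : bxor p.1 p.2 x ≠ bxor p.1 p.2 w) (hz : bxor p.1 p.2 z = bxor p.1 p.2 x) (hzx : z ≠ x) :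
    hyp (rival p x w).1 (rival p x w).2 z = hyp p.1 p.2 z := by
  have hzw : z ≠ w := by rintro rfl; exact hw hz.symm
  rw [hyp_apply_fin_eq_iff, bxor_rival, flip2_apply_of_ne hzx hzw, hz]
  exact ⟨rfl, cond_rival p x w⟩

lemma hyp_rival_apply_ne (p : BStr D × BStr D) {x w : Fin D}
    (hw : bxor p.1 p.2 x ≠ bxor p.1 p.2 w) :
    hyp (rival p x w).1 (rival p x w).2 x ≠ hyp p.1 p.2 x := by
  have hxw : x ≠ w := by rintro rfl; exact hw rfl
  intro h
  have := (hyp_apply_fin_eq_iff.1 h).1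
  rw [bxor_rival, flip2_apply_left hxw] at this
  cases hc : bxor p.1 p.2 x <;> simp_all

def separatingPairs (x w : Fin D) : Finset (BStr D × BStr D) :=
  {p | BalancedStr (bxor p.1 p.2) ∧ bxor p.1 p.2 x ≠ bxor p.1 p.2 w}

lemma mem_separatingPairs {p : BStr D × BStr D} {x w : Fin D} :
    p ∈ separatingPairs x w ↔
      BalancedStr (bxor p.1 p.2) ∧ bxor p.1 p.2 x ≠ bxor p.1 p.2 w := by
  simp [separatingPairs]

lemma rival_mem_separatingPairs {p : BStr D × BStr D} {x w : Fin D}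
    (hp : p ∈ separatingPairs x w) : rival p x w ∈ separatingPairs x w := by
  obtain ⟨hbal, hne⟩ := mem_separatingPairs.1 hp
  have hxw : x ≠ w := by rintro rfl; exact hne rfl
  rw [mem_separatingPairs, bxor_rival, flip2_apply_left hxw, flip2_apply_right hxw]
  exact ⟨hbal.flip2 hne, by simpa using hne⟩

lemma iterate_rival_mem_separatingPairs {p : BStr D × BStr D} {x w : Fin D}
    (hp : p ∈ separatingPairs x w) (k : ℕ) : (rival · x w)^[k] p ∈ separatingPairs x w :=
  Set.MapsTo.iterate (fun _ => rival_mem_separatingPairs) k hp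

lemma sum_separatingPairs_comp_rival {M : Type*} [AddCommMonoid M] (x w : Fin D)
    (f : BStr D × BStr D → M) :
    ∑ p ∈ separatingPairs x w, f (rival p x w) = ∑ p ∈ separatingPairs x w, f p := by
  by_cases hxw : x = w
  · subst hxw; simp [separatingPairs]
  refine sum_nbij' (rival · x w) (rival · x w)^[3] (fun _ => rival_mem_separatingPairs)
    (fun _ hp => iterate_rival_mem_separatingPairs hp 3) (fun p _ => ?_) (fun p _ => ?_)
    (fun _ _ => rfl)
  · simp only [← Function.iterate_succ_apply, rival_iterate_four p hxw]
  · simp only [← Function.iterate_succ_apply' (rival · x w), rival_iterate_four p hxw]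

lemma sum_separatingPairs_comp_iterate_rival {M : Type*} [AddCommMonoid M] (x w : Fin D)
    (f : BStr D × BStr D → M) (k : ℕ) :
    ∑ p ∈ separatingPairs x w, f ((rival · x w)^[k] p) = ∑ p ∈ separatingPairs x w, f p := by
  induction k with
  | zero => rfl
  | succ k ih =>
    simp only [Function.iterate_succ_apply]
    exact (sum_separatingPairs_comp_rival x w (fun p => f ((rival · x w)^[k] p))).trans ih

end Rival

def extendReg (ψ : HOTP → ℕ → NNReal) (f : ℕ → Label) (x : ℕ) : NNReal :=
  if hf : f ∈ HOTP then ψ ⟨f, hf⟩ x else 0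

lemma extendReg_of_mem (ψ : HOTP → ℕ → NNReal) {f : ℕ → Label} (hf : f ∈ HOTP) (x : ℕ) :
    extendReg ψ f x = ψ ⟨f, hf⟩ x :=
  dif_pos hf

section BadSet

variable {D : ℕ} (ψ : HOTP → ℕ → NNReal)

def badSet (p : BStr D × BStr D) : Finset (Fin D) :=
  {x | ∃ w, bxor p.1 p.2 x ≠ bxor p.1 p.2 w ∧
    extendReg ψ (hyp (rival p x w).1 (rival p x w).2) x < extendReg ψ (hyp p.1 p.2) x}

lemma mem_badSet {p : BStr D × BStr D} {x : Fin D} :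
    x ∈ badSet ψ p ↔ ∃ w, bxor p.1 p.2 x ≠ bxor p.1 p.2 w ∧
      extendReg ψ (hyp (rival p x w).1 (rival p x w).2) x < extendReg ψ (hyp p.1 p.2) x := by
  simp [badSet]

/-- Going once around the cycle `p, rival p, rival² p, rival³ p` the value of `ψ` at `x` could
never decrease if `x` were bad for none of them, so it would be the same for `p` and its rival,
which local injectivity forbids. -/
lemma exists_mem_badSet_iterate_rival (hψ : LocallyInjective HOTP ψ)
    {p : BStr D × BStr D} {x w : Fin D} (hp : p ∈ separatingPairs x w) :
    ∃ k < 4, x ∈ badSet ψ ((rival · x w)^[k] p) := by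
  by_contra! hgood
  obtain ⟨hbal, hne⟩ := mem_separatingPairs.1 hp
  have hxw : x ≠ w := by rintro rfl; exact hne rfl
  let r k := extendReg ψ (hyp ((rival · x w)^[k] p).1 ((rival · x w)^[k] p).2) x
  have hle : ∀ k < 4, r k ≤ r (k + 1) := by
    intro k hk
    have hk := hgood k hk
    simp only [mem_badSet, not_exists, not_and, not_lt] at hk
    simp only [r, Function.iterate_succ_apply']
    exact hk w (mem_separatingPairs.1 (iterate_rival_mem_separatingPairs hp k)).2
  have h40 : r 4 = r 0 := by simp only [r, rival_iterate_four p hxw]; rfl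
  have h01 : r 0 = r 1 := (hle 0 (by norm_num)).antisymm <|
    (hle 1 (by norm_num)).trans <| (hle 2 (by norm_num)).trans <| (hle 3 (by norm_num)).trans h40.le
  have hrbal := (mem_separatingPairs.1 (rival_mem_separatingPairs hp)).1
  simp only [r, Function.iterate_zero_apply, Function.iterate_one,
    extendReg_of_mem ψ (hyp_mem_HOTP hbal x.pos),
    extendReg_of_mem ψ (hyp_mem_HOTP hrbal x.pos)] at h01
  exact hyp_rival_apply_ne p hne (congrFun (congrArg Subtype.val (hψ x h01)) x).symm

lemma card_separatingPairs_le (hψ : LocallyInjective HOTP ψ) (x w : Fin D) :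
    #(separatingPairs x w) ≤ 4 * #{p ∈ separatingPairs x w | x ∈ badSet ψ p} := by
  let bad : BStr D × BStr D → ℕ := fun p => if x ∈ badSet ψ p then 1 else 0
  calc #(separatingPairs x w) = ∑ p ∈ separatingPairs x w, 1 := card_eq_sum_ones _
    _ ≤ ∑ p ∈ separatingPairs x w, ∑ k ∈ range 4, bad ((rival · x w)^[k] p) := by
      refine sum_le_sum fun p hp => ?_
      obtain ⟨k, hk, hbad⟩ := exists_mem_badSet_iterate_rival ψ hψ hp
      exact single_le_sum (f := fun k => bad ((rival · x w)^[k] p)) (fun _ _ => Nat.zero_le _)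
        (mem_range.2 hk) |>.trans' (by simp [bad, hbad])
    _ = 4 * #{p ∈ separatingPairs x w | x ∈ badSet ψ p} := by
      rw [sum_comm]
      simp only [sum_separatingPairs_comp_iterate_rival x w bad, sum_const, card_range,
        smul_eq_mul, bad, sum_boole, Nat.cast_id]

end BadSet

section Counting

variable {D : ℕ}

lemma two_mul_card_ne {C : BStr D} (hC : BalancedStr C) (x : Fin D) :
    2 * #{w | C x ≠ C w} = D := by
  convert (balancedStr_iff C).1 hC (!C x) using 3
  ext w
  cases C x <;> cases C w <;> simp

lemma two_mul_sum_card_filter_separatingPairs (g : BStr D × BStr D → Fin D → Prop)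
    [∀ p x, Decidable (g p x)] :
    2 * ∑ x, ∑ w, #{p ∈ separatingPairs x w | g p x} =
      D * ∑ p with BalancedStr (bxor p.1 p.2), #{x | g p x} := by
  calc 2 * ∑ x, ∑ w, #{p ∈ separatingPairs x w | g p x}
      = ∑ p : BStr D × BStr D, 2 * ∑ x, ∑ w,
          if (BalancedStr (bxor p.1 p.2) ∧ bxor p.1 p.2 x ≠ bxor p.1 p.2 w) ∧ g p x
          then 1 else 0 := by
        simp only [separatingPairs, filter_filter, card_filter, ← mul_sum]
        exact congrArg _ ((sum_congr rfl fun x _ => sum_comm).trans sum_comm)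
    _ = ∑ p : BStr D × BStr D, D * if BalancedStr (bxor p.1 p.2) then #{x | g p x} else 0 := by
        refine sum_congr rfl fun p _ => ?_
        split_ifs with hp
        · simp only [hp, true_and, card_filter, mul_sum]
          refine sum_congr rfl fun x _ => ?_
          have h := two_mul_card_ne hp x
          rw [card_filter, mul_sum] at h
          by_cases hx : g p x
          · simpa only [hx, and_true, if_true, mul_one] using h
          · simp [hx]
        · simp [hp]
    _ = D * ∑ p with BalancedStr (bxor p.1 p.2), #{x | g p x} := by
        rw [sum_filter, mul_sum]

lemma exists_card_le_two_mul_card_filter_eq {α : Type*} (s : Finset α) (f : α → Bool) :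
    ∃ b, #s ≤ 2 * #{a ∈ s | f a = b} := by
  have := card_filter_add_card_filter_not (s := s) (fun a => f a = false)
  simp only [Bool.not_eq_false] at this
  by_cases h : #{a ∈ s | f a = true} ≤ #{a ∈ s | f a = false}
  · exact ⟨false, by omega⟩
  · exact ⟨true, by omega⟩

end Counting

lemma exists_le_four_mul_card_badSet (ψ : HOTP → ℕ → NNReal) (hψ : LocallyInjective HOTP ψ)
    {D : ℕ} (hD : Even D) :
    ∃ p : BStr D × BStr D, BalancedStr (bxor p.1 p.2) ∧ D ≤ 4 * #(badSet ψ p) := by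
  obtain ⟨C, hC⟩ := exists_balancedStr hD
  have hK : ({p | BalancedStr (bxor p.1 p.2)} : Finset (BStr D × BStr D)).Nonempty :=
    ⟨(fun _ => false, C), by
      simpa [show bxor (fun _ => false) C = C from funext fun z => Bool.false_xor (C z)] using hC⟩
  have hcount : D * ∑ p : BStr D × BStr D with BalancedStr (bxor p.1 p.2), D ≤
      D * ∑ p : BStr D × BStr D with BalancedStr (bxor p.1 p.2), 4 * #(badSet ψ p) := by
    have hall := two_mul_sum_card_filter_separatingPairs (D := D) fun _ _ => True
    have hbad := two_mul_sum_card_filter_separatingPairs (D := D) fun p x => x ∈ badSet ψ p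
    simp only [filter_true, card_univ, Fintype.card_fin] at hall
    simp only [filter_mem_eq_inter, univ_inter] at hbad
    calc D * ∑ p : BStr D × BStr D with BalancedStr (bxor p.1 p.2), D
        = 2 * ∑ x, ∑ w, #(separatingPairs x w) := hall.symm
      _ ≤ 2 * ∑ x, ∑ w, 4 * #{p ∈ separatingPairs x w | x ∈ badSet ψ p} := by
        gcongr with x _ w; exact card_separatingPairs_le ψ hψ x w
      _ = D * ∑ p : BStr D × BStr D with BalancedStr (bxor p.1 p.2), 4 * #(badSet ψ p) := by
        simp only [← mul_sum]
        rw [mul_left_comm, hbad]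
        ring
  obtain ⟨p, hp, hle⟩ :=
    exists_le_of_sum_le (f := fun _ => D) (g := fun p => 4 * #(badSet ψ p)) hK <| by
      rcases D.eq_zero_or_pos with rfl | hD0
      · simp
      · exact Nat.le_of_mul_le_mul_left hcount hD0
  exact ⟨p, (mem_filter.1 hp).2, hle⟩

section World

variable {D : ℕ} {ψ : HOTP → ℕ → NNReal} {Alg : List (ℕ × Label) → ℕ → Label}

/-- Only finitely many hypotheses fit the sample, since its labels reveal the length of the
shares; the preferred rival fits it, and `h_{P,Q}` is the only fitting hypothesis with its value
at `x`, since two balanced strings that agree on a fiber of one of them coincide. -/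
lemma apply_ne_of_mem_badSet (hAlg : InducedBy HOTP ψ Alg) {p : BStr D × BStr D}
    (hp : BalancedStr (bxor p.1 p.2)) {x : Fin D} (hx : x ∈ badSet ψ p) {L : List (ℕ × Label)}
    (hL : ∀ g : ℕ → Label, empRisk L g = 0 ↔
      ∀ z : Fin D, bxor p.1 p.2 z = bxor p.1 p.2 x → z ≠ x → g z = hyp p.1 p.2 z)
    {z₀ : Fin D} (hz₀ : bxor p.1 p.2 z₀ = bxor p.1 p.2 x) (hz₀x : z₀ ≠ x) :
    Alg L x ≠ hyp p.1 p.2 x := by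
  obtain ⟨w, hw, hlt⟩ := (mem_badSet ψ).1 hx
  have hmem := hyp_mem_HOTP hp x.pos
  have hrmem := hyp_mem_HOTP (bxor_rival p x w ▸ hp.flip2 hw) x.pos
  rw [extendReg_of_mem ψ hmem, extendReg_of_mem ψ hrmem] at hlt
  refine hAlg.apply_ne (h := ⟨_, hmem⟩) (g := ⟨_, hrmem⟩) ?_ ((hL _).2 fun _ _ _ => rfl)
    ((hL _).2 fun z hz hzx => hyp_rival_apply_of_ne p hw hz hzx) hlt ?_
  · refine ((finite_setOf_mem_HOTP_apply_eq z₀ (hyp p.1 p.2 z₀)).preimage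
      Subtype.val_injective.injOn).subset fun f hf => ⟨f.2, (hL _).1 hf z₀ hz₀ hz₀x⟩
  · intro f hf hfx
    obtain ⟨d', A, B, -, hAB, hfAB⟩ := f.2
    refine Subtype.ext (hfAB.trans (hyp_eq_of_forall_fiber hAB hp x fun z hz => ?_))
    rw [← hfAB]
    by_cases hzx : z = x
    · subst hzx; exact hfx
    · exact (hL _).1 hf z hz hzx

lemma exists_injective_div_le_transErr (hAlg : InducedBy HOTP ψ Alg) {p : BStr D × BStr D}
    (hp : BalancedStr (bxor p.1 p.2)) (b : Bool) {n : ℕ} (hn : 2 ≤ n)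
    (hcard : #{z | bxor p.1 p.2 z = b} = n) :
    ∃ S : Fin n → ℕ, S.Injective ∧
      (#{x ∈ badSet ψ p | bxor p.1 p.2 x = b} : ℝ) / n ≤ transErr Alg S (hyp p.1 p.2) := by
  let e := equivFinOfCardEq hcard
  let T : Fin n → Fin D := fun i => (e.symm i).1
  have hT : T.Injective := Subtype.val_injective.comp e.symm.injective
  have hTb i : bxor p.1 p.2 (T i) = b := (mem_filter.1 (e.symm i).2).2
  have hTsurj z (hz : bxor p.1 p.2 z = b) : ∃ i, T i = z :=
    ⟨e ⟨z, mem_filter.2 ⟨mem_univ z, hz⟩⟩, by simp [T]⟩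
  have hcardE : #{x ∈ badSet ψ p | bxor p.1 p.2 x = b} = #{i | T i ∈ badSet ψ p} := by
    refine (card_bij (fun i _ => T i) (fun i hi => ?_) (fun i _ j _ h => hT h) ?_).symm
    · exact mem_filter.2 ⟨(mem_filter.1 hi).2, hTb i⟩
    · intro z hz
      obtain ⟨i, rfl⟩ := hTsurj z (mem_filter.1 hz).2
      exact ⟨i, mem_filter.2 ⟨mem_univ i, (mem_filter.1 hz).1⟩, rfl⟩
  refine ⟨fun i => T i, Fin.val_injective.comp hT, ?_⟩
  rw [hcardE]
  refine card_div_le_transErr _ _ _ _ fun i hi => ?_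
  have : Nontrivial (Fin n) := Fin.nontrivial_iff_two_le.2 hn
  obtain ⟨j, hji⟩ := exists_ne i
  refine apply_ne_of_mem_badSet hAlg hp (mem_filter.1 hi).2 (fun g => ?_)
    ((hTb j).trans (hTb i).symm) (hT.ne hji)
  rw [empRisk_trainSeq_eq_zero_iff]
  constructor
  · intro H z hz hzx
    obtain ⟨j, rfl⟩ := hTsurj z (hz.trans (hTb i))
    exact H j fun hji => hzx (hji ▸ rfl)
  · exact fun H j hji => H (T j) ((hTb j).trans (hTb i).symm) (hT.ne hji)

end World

/-- for every locally injective local regularizer `ψ` for `H_OTP`, every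
learner induced by `ψ`, and every `d ≥ 1`, there is a sequence of `2d` distinct points
and a ground truth in `H_OTP` on which the transductive error is at least `1/4`. -/
theorem statement7 (ψ : HOTP → ℕ → NNReal) (hψ : LocallyInjective HOTP ψ)
    (Alg : List (ℕ × Label) → ℕ → Label) (hAlg : InducedBy HOTP ψ Alg)
    (d : ℕ) (hd : 1 ≤ d) :
    ∃ S : Fin (2 * d) → ℕ, Function.Injective S ∧
      ∃ h ∈ HOTP, (1 : ℝ) / 4 ≤ transErr Alg S h := by
  obtain ⟨p, hp, hbad⟩ := exists_le_four_mul_card_badSet ψ hψ (D := 4 * d) ⟨2 * d, by ring⟩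
  obtain ⟨b, hb⟩ := exists_card_le_two_mul_card_filter_eq (badSet ψ p) (bxor p.1 p.2)
  have hcard : #{z | bxor p.1 p.2 z = b} = 2 * d := by
    have := (balancedStr_iff _).1 hp b
    omega
  obtain ⟨S, hS, herr⟩ := exists_injective_div_le_transErr hAlg hp b (by omega) hcard
  refine ⟨S, hS, hyp p.1 p.2, hyp_mem_HOTP hp (by omega), le_trans ?_ herr⟩
  rw [div_le_div_iff₀ (by norm_num) (by positivity)]
  exact_mod_cast (by omega : 1 * (2 * d) ≤ #{x ∈ badSet ψ p | bxor p.1 p.2 x = b} * 4)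
end
end

section
/- Let d ≥ 1, let C ∈ {0,1}^{2d} be balanced, and let B ∈ {0,1}^{2d}. Then h_{B⊕C, B} is the unique hypothesis h ∈ H_OTP satisfying h(s) = (1, B) for every s ∈ σ1(C). -/
open scoped Classical

noncomputable section

/-!
A hypothesis of `H_OTP` that outputs `(1, B)` anywhere reveals its second string `B`, hence its
length `2d`. On positions below `2d` it outputs `(1, B)` exactly on `σ₁(A ⊕ B)`, so agreeing
with `(1, B)` on `σ₁(C)` means `σ₁(C) ⊆ σ₁(A ⊕ B)`; both strings are balanced, so both sets
have `d` elements, whence `A ⊕ B = C` and `A = B ⊕ C`.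
-/

section Strings

variable {n : ℕ}

lemma bxor_comm (A B : BStr n) : bxor A B = bxor B A :=
  funext fun i => Bool.xor_comm (A i) (B i)

lemma bxor_bxor_cancel_left (A B : BStr n) : bxor A (bxor A B) = B :=
  funext fun i => Bool.bne_self_left (A i) (B i)

lemma mem_sigma1 {C : BStr n} {i : Fin n} : i ∈ sigma1 C ↔ C i = true := by
  simp [sigma1]

lemma sigma1_injective : Function.Injective (sigma1 : BStr n → Finset (Fin n)) := by
  intro C D h
  funext i
  rw [Bool.eq_iff_iff, ← mem_sigma1, ← mem_sigma1, h]

lemma card_sigma0_add_card_sigma1 (C : BStr n) : (sigma0 C).card + (sigma1 C).card = n := by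
  have h := Finset.card_filter_add_card_filter_not (s := Finset.univ) (fun i => C i = true)
  simpa [sigma0, sigma1, add_comm] using h

lemma BalancedStr.two_mul_card_sigma1 {C : BStr n} (hC : BalancedStr C) :
    2 * (sigma1 C).card = n := by
  have := card_sigma0_add_card_sigma1 C
  rw [BalancedStr] at hC
  omega

lemma BalancedStr.eq_of_sigma1_subset {C D : BStr n} (hC : BalancedStr C) (hD : BalancedStr D)
    (h : sigma1 C ⊆ sigma1 D) : C = D := by
  refine sigma1_injective (Finset.eq_of_subset_of_card_le h ?_)
  have := hC.two_mul_card_sigma1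
  have := hD.two_mul_card_sigma1
  omega

end Strings

section Hypotheses

variable {d : ℕ}

lemma ofFn_eq_of_hyp_eq_true {A B : BStr d} {x : ℕ} {L : List Bool}
    (h : hyp A B x = (true, L)) : List.ofFn B = L := by
  unfold hyp at h
  split_ifs at h <;> simp_all

lemma hyp_coe_eq_true_iff (A B : BStr d) (i : Fin d) (L : List Bool) :
    hyp A B i = (true, L) ↔ i ∈ sigma1 (bxor A B) ∧ List.ofFn B = L := by
  have hi : (⟨(i : ℕ) % d, Nat.mod_lt _ i.pos⟩ : Fin d) = i := Fin.ext (Nat.mod_eq_of_lt i.isLt)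
  rw [hyp, dif_pos i.pos, hi, mem_sigma1]
  split_ifs with hAB <;> simp [hAB]

end Hypotheses

/-- `h_{B⊕C, B}` is the unique hypothesis in `H_OTP` mapping every
`s ∈ σ₁(C)` to `(1, B)`. -/
theorem statement11 (d : ℕ) (hd : 1 ≤ d) (C : BStr (2 * d)) (hC : BalancedStr C)
    (B : BStr (2 * d)) :
    hyp (bxor B C) B ∈ HOTP ∧
    (∀ s ∈ sigma1 C, hyp (bxor B C) B s = (true, List.ofFn B)) ∧
    ∀ h ∈ HOTP, (∀ s ∈ sigma1 C, h s = (true, List.ofFn B)) →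
      h = hyp (bxor B C) B := by
  have hBC : bxor (bxor B C) B = C := by rw [bxor_comm, bxor_bxor_cancel_left]
  refine ⟨⟨2 * d, bxor B C, B, by omega, by rwa [hBC], rfl⟩, fun s hs => ?_, ?_⟩
  · exact (hyp_coe_eq_true_iff _ _ _ _).2 ⟨by rwa [hBC], rfl⟩
  rintro _ ⟨d', A, B', -, hAB, rfl⟩ hagree
  obtain ⟨s₀, hs₀⟩ : (sigma1 C).Nonempty := by
    rw [← Finset.card_pos]
    have := hC.two_mul_card_sigma1
    omega
  have hB' := ofFn_eq_of_hyp_eq_true (hagree s₀ hs₀)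
  obtain rfl : d' = 2 * d := by simpa using congrArg List.length hB'
  obtain rfl := List.ofFn_injective hB'
  have hCA : C = bxor A B' := hC.eq_of_sigma1_subset hAB fun s hs =>
    ((hyp_coe_eq_true_iff _ _ _ _).1 (hagree s hs)).1
  rw [hCA, bxor_comm A, bxor_bxor_cancel_left]
end
end
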